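/- For all n ≥ 0, the number of 123-avoiding permutations of {1,...,n} equals the number of 132-avoiding permutations of {1,...,n}. -/
import Mathlib


def Avoids123 {n : ℕ} (π : Equiv.Perm (Fin n)) : Prop :=
  ¬ ∃ i j k : Fin n, i < j ∧ j < k ∧ π i < π j ∧ π j < π k

def Avoids132 {n : ℕ} (π : Equiv.Perm (Fin n)) : Prop :=
  ¬ ∃ i j k : Fin n, i < j ∧ j < k ∧ π i < π k ∧ π k < π j

namespace SS

variable {n : ℕ}

def IsMin (f : Fin n → Fin n) (j : Fin n) : Prop := ∀ i, i < j → f j < f i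

instance (f : Fin n → Fin n) (j : Fin n) : Decidable (IsMin f j) := by
  unfold IsMin; infer_instance

def pdata (f : Fin n → Fin n) (j : Fin n) : Option (Fin n) :=
  if IsMin f j then some (f j) else none

lemma iio_img_ne (f : Fin n → Fin n) {j : Fin n} (h : ¬ IsMin f j) :
    ((Finset.Iio j).image f).Nonempty := by
  simp only [IsMin, not_forall] at h
  obtain ⟨i, hi, -⟩ := h
  exact ⟨f i, Finset.mem_image_of_mem f (Finset.mem_Iio.mpr hi)⟩

/-- the running minimum of `f` before position `j` -/
def rmin (f : Fin n → Fin n) (j : Fin n) (h : ¬ IsMin f j) : Fin n :=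
  ((Finset.Iio j).image f).min' (iio_img_ne f h)

lemma rmin_le {f : Fin n → Fin n} {j : Fin n} (h : ¬ IsMin f j) {i : Fin n} (hi : i < j) :
    rmin f j h ≤ f i :=
  Finset.min'_le _ _ (Finset.mem_image_of_mem f (Finset.mem_Iio.mpr hi))

lemma rmin_anti {f : Fin n → Fin n} {i j : Fin n} (hi : ¬ IsMin f i) (hj : ¬ IsMin f j)
    (hij : i < j) : rmin f j hj ≤ rmin f i hi := by
  obtain ⟨i0, hi0, he⟩ := Finset.mem_image.mp (Finset.min'_mem _ (iio_img_ne f hi))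
  have he' : rmin f i hi = f i0 := he.symm
  rw [he']
  exact Finset.min'_le _ _
    (Finset.mem_image_of_mem f (Finset.mem_Iio.mpr ((Finset.mem_Iio.mp hi0).trans hij)))

lemma rmin_argmin {f : Fin n → Fin n} (hf : Function.Injective f) {j : Fin n}
    (h : ¬ IsMin f j) : ∃ i0, i0 < j ∧ IsMin f i0 ∧ f i0 = rmin f j h := by
  obtain ⟨i0, hi0, he⟩ := Finset.mem_image.mp (Finset.min'_mem _ (iio_img_ne f h))
  rw [Finset.mem_Iio] at hi0
  have he : f i0 = rmin f j h := he
  refine ⟨i0, hi0, fun i hii0 => ?_, he⟩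
  have he' : rmin f j h = f i0 := he.symm
  have h1 : rmin f j h ≤ f i := rmin_le h (hii0.trans hi0)
  rw [he'] at h1
  exact lt_of_le_of_ne h1 (fun he2 => absurd (hf he2) (ne_of_gt hii0))

lemma rmin_lt_of_not_min {f : Fin n → Fin n} (hf : Function.Injective f) {j : Fin n}
    (h : ¬ IsMin f j) : rmin f j h < f j := by
  have h2 := h
  simp only [IsMin, not_forall] at h2
  obtain ⟨i, hi, hle⟩ := h2
  push_neg at hle
  have : rmin f j h ≤ f j := le_trans (rmin_le h hi) hle
  refine lt_of_le_of_ne this (fun he => ?_)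
  obtain ⟨i0, hi0, -, he0⟩ := rmin_argmin hf h
  rw [← he0] at he
  exact absurd (hf he) (ne_of_lt hi0)

def comp (b : Bool) (f : Fin n → Fin n) (j : Fin n) : Fin n :=
  if h : IsMin f j then f j
  else
    let used : Finset (Fin n) := (Finset.Iio j).attach.image (fun i => comp b f i.1)
    let cand : Finset (Fin n) :=
      Finset.univ.filter (fun v => v ∉ used ∧ rmin f j h < v)
    if hc : cand.Nonempty then (if b then cand.min' hc else cand.max' hc) else f j
termination_by j.val
decreasing_by exact Fin.lt_def.mp (Finset.mem_Iio.mp i.2)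

def cand (b : Bool) (f : Fin n → Fin n) (j : Fin n) (h : ¬ IsMin f j) : Finset (Fin n) :=
  Finset.univ.filter (fun v => v ∉ (Finset.Iio j).image (comp b f) ∧ rmin f j h < v)

lemma mem_cand {b : Bool} {f : Fin n → Fin n} {j : Fin n} {h : ¬ IsMin f j} {v : Fin n} :
    v ∈ cand b f j h ↔ v ∉ (Finset.Iio j).image (comp b f) ∧ rmin f j h < v := by
  simp [cand]

lemma comp_of_min {b : Bool} {f : Fin n → Fin n} {j : Fin n} (h : IsMin f j) :
    comp b f j = f j := by rw [comp]; simp [h]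

lemma attach_img (b : Bool) (f : Fin n → Fin n) (j : Fin n) :
    (Finset.Iio j).attach.image (fun i => comp b f i.1) = (Finset.Iio j).image (comp b f) := by
  ext x; simp

lemma comp_of_not_min {b : Bool} {f : Fin n → Fin n} {j : Fin n} (h : ¬ IsMin f j)
    (hc : (cand b f j h).Nonempty) :
    comp b f j = if b then (cand b f j h).min' hc else (cand b f j h).max' hc := by
  conv_lhs => rw [comp]
  rw [dif_neg h]
  simp only [attach_img]
  have hc' : (Finset.filter
      (fun v => v ∉ Finset.image (comp b f) (Finset.Iio j) ∧ rmin f j h < v) Finset.univ).Nonempty := hc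
  rw [dif_pos hc']
  rfl

lemma comp_of_not_min_empty {b : Bool} {f : Fin n → Fin n} {j : Fin n} (h : ¬ IsMin f j)
    (hc : ¬ (cand b f j h).Nonempty) : comp b f j = f j := by
  conv_lhs => rw [comp]
  rw [dif_neg h]
  simp only [attach_img]
  have hc' : ¬ (Finset.filter
      (fun v => v ∉ Finset.image (comp b f) (Finset.Iio j) ∧ rmin f j h < v) Finset.univ).Nonempty := hc
  rw [dif_neg hc']

lemma comp_mem_cand {b : Bool} {f : Fin n → Fin n} {j : Fin n} (h : ¬ IsMin f j)
    (hc : (cand b f j h).Nonempty) : comp b f j ∈ cand b f j h := by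
  rw [comp_of_not_min h hc]
  cases b
  · simpa using Finset.max'_mem _ hc
  · simpa using Finset.min'_mem _ hc

lemma rmin_le_comp {b : Bool} {f : Fin n → Fin n} {j : Fin n} (h : ¬ IsMin f j)
    {i : Fin n} (hi : i < j) : rmin f j h ≤ comp b f i := by
  by_cases hm : IsMin f i
  · rw [comp_of_min hm]; exact rmin_le h hi
  · by_cases hc : (cand b f i hm).Nonempty
    · have := (mem_cand.mp (comp_mem_cand hm hc)).2
      exact le_trans (rmin_anti hm h hi) this.le
    · rw [comp_of_not_min_empty hm hc]; exact rmin_le h hi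


lemma cand_nonempty {b : Bool} {f : Fin n → Fin n} (hf : Function.Injective f) {j : Fin n}
    (h : ¬ IsMin f j) : (cand b f j h).Nonempty := by
  by_contra hc
  rw [Finset.not_nonempty_iff_eq_empty] at hc
  set m := rmin f j h with hm
  set used := (Finset.Iio j).image (comp b f) with hu
  -- every value > m is used
  have hsub : Finset.Ioi m ⊆ used := by
    intro v hv
    rw [Finset.mem_Ioi] at hv
    by_contra hvu
    have : v ∈ cand b f j h := mem_cand.mpr ⟨hvu, hv⟩
    rw [hc] at this
    exact absurd this (Finset.notMem_empty v)
  -- m itself is used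
  have hmu : m ∈ used := by
    obtain ⟨i0, hi0, hmin, he⟩ := rmin_argmin hf h
    rw [hu, Finset.mem_image]
    exact ⟨i0, Finset.mem_Iio.mpr hi0, by rw [comp_of_min hmin, he]⟩
  have hins : insert m (Finset.Ioi m) ⊆ used := Finset.insert_subset hmu hsub
  have hcard1 : n - 1 - m.val + 1 ≤ j.val := by
    have h1 := Finset.card_le_card hins
    rw [Finset.card_insert_of_notMem (by simp)] at h1
    have h2 := Finset.card_le_card (Finset.image_subset_iff.mpr
      (fun i _ => Finset.mem_univ (comp b f i)) : used ⊆ Finset.univ)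
    have h3 : used.card ≤ (Finset.Iio j).card := Finset.card_image_le
    rw [Fin.card_Ioi] at h1
    rw [Fin.card_Iio] at h3
    omega
  -- but f takes j+1 distinct values ≥ m on Iic j
  have hsub2 : (Finset.Iic j).image f ⊆ Finset.Ici m := by
    intro v hv
    obtain ⟨i, hi, he⟩ := Finset.mem_image.mp hv
    rw [Finset.mem_Iic] at hi
    rw [Finset.mem_Ici, ← he]
    rcases lt_or_eq_of_le hi with hlt | rfl
    · exact rmin_le h hlt
    · exact (rmin_lt_of_not_min hf h).le
  have hcard2 : j.val + 1 ≤ n - m.val := by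
    have h1 := Finset.card_le_card hsub2
    rw [Finset.card_image_of_injective _ hf, Fin.card_Iic, Fin.card_Ici] at h1
    exact h1
  have hmn : m.val < n := m.isLt
  have hjn : j.val < n := j.isLt
  omega

lemma lt_comp_of_min {b : Bool} {f : Fin n → Fin n} {j : Fin n} (h : IsMin f j)
    {i : Fin n} (hi : i < j) : f j < comp b f i := by
  by_cases hm : IsMin f i
  · rw [comp_of_min hm]; exact h i hi
  · by_cases hc : (cand b f i hm).Nonempty
    · have h1 := (mem_cand.mp (comp_mem_cand hm hc)).2
      obtain ⟨i0, hi0, he0⟩ := Finset.mem_image.mp (Finset.min'_mem _ (iio_img_ne f hm))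
      have he0' : f i0 = rmin f i hm := he0
      calc f j < f i0 := h i0 ((Finset.mem_Iio.mp hi0).trans hi)
        _ = rmin f i hm := he0'
        _ < comp b f i := h1
    · rw [comp_of_not_min_empty hm hc]; exact h i hi

lemma comp_ne_of_lt {b : Bool} {f : Fin n → Fin n} (hf : Function.Injective f)
    {i j : Fin n} (hij : i < j) : comp b f i ≠ comp b f j := by
  by_cases hm : IsMin f j
  · rw [comp_of_min hm]
    exact (lt_comp_of_min hm hij).ne'
  · have h1 := (mem_cand.mp (comp_mem_cand (b := b) hm (cand_nonempty hf hm))).1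
    intro he
    exact h1 (Finset.mem_image.mpr ⟨i, Finset.mem_Iio.mpr hij, he⟩)

lemma comp_injective {b : Bool} {f : Fin n → Fin n} (hf : Function.Injective f) :
    Function.Injective (comp b f) := by
  intro i j he
  rcases lt_trichotomy i j with h | h | h
  · exact absurd he (comp_ne_of_lt hf h)
  · exact h
  · exact absurd he.symm (comp_ne_of_lt hf h)

lemma isMin_comp_iff {b : Bool} {f : Fin n → Fin n} (hf : Function.Injective f) (j : Fin n) :
    IsMin (comp b f) j ↔ IsMin f j := by
  constructor
  · intro hcm
    by_contra hm
    obtain ⟨i0, hi0, hmin, he⟩ := rmin_argmin hf hm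
    have h1 := (mem_cand.mp (comp_mem_cand (b := b) hm (cand_nonempty hf hm))).2
    have h2 := hcm i0 hi0
    rw [comp_of_min hmin, he] at h2
    exact absurd h1 (not_lt.mpr h2.le)
  · intro hm i hi
    rw [comp_of_min hm]
    exact lt_comp_of_min hm hi

lemma pdata_comp {b : Bool} {f : Fin n → Fin n} (hf : Function.Injective f) :
    pdata (comp b f) = pdata f := by
  funext j
  unfold pdata
  by_cases hm : IsMin f j
  · rw [if_pos hm, if_pos ((isMin_comp_iff hf j).mpr hm), comp_of_min hm]
  · rw [if_neg hm, if_neg (fun hc => hm ((isMin_comp_iff hf j).mp hc))]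

lemma comp_avoids132 {f : Fin n → Fin n} (hf : Function.Injective f)
    {i j k : Fin n} (hij : i < j) (hjk : j < k)
    (h1 : comp true f i < comp true f k) (h2 : comp true f k < comp true f j) : False := by
  have hm : ¬ IsMin f j := by
    intro hm
    exact absurd (h1.trans h2) (not_lt.mpr ((isMin_comp_iff hf j).mpr hm i hij).le)
  have hck : comp true f k ∈ cand true f j hm := by
    refine mem_cand.mpr ⟨?_, ?_⟩
    · intro hk
      obtain ⟨i', hi', he⟩ := Finset.mem_image.mp hk
      exact absurd (comp_injective hf he) (ne_of_lt ((Finset.mem_Iio.mp hi').trans hjk))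
    · exact lt_of_le_of_lt (rmin_le_comp hm hij) h1
  rw [comp_of_not_min hm (cand_nonempty hf hm)] at h2
  simp only [if_pos rfl] at h2
  exact absurd (Finset.min'_le _ _ hck) (not_le.mpr h2)

lemma comp_avoids123 {f : Fin n → Fin n} (hf : Function.Injective f)
    {i j k : Fin n} (hij : i < j) (hjk : j < k)
    (h1 : comp false f i < comp false f j) (h2 : comp false f j < comp false f k) : False := by
  have hm : ¬ IsMin f j := by
    intro hm
    exact absurd h1 (not_lt.mpr ((isMin_comp_iff hf j).mpr hm i hij).le)
  have hck : comp false f k ∈ cand false f j hm := by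
    refine mem_cand.mpr ⟨?_, ?_⟩
    · intro hk
      obtain ⟨i', hi', he⟩ := Finset.mem_image.mp hk
      exact absurd (comp_injective hf he) (ne_of_lt ((Finset.mem_Iio.mp hi').trans hjk))
    · exact lt_of_le_of_lt (rmin_le_comp hm hij) (h1.trans h2)
  rw [comp_of_not_min hm (cand_nonempty hf hm)] at h2
  simp only [Bool.false_eq_true, if_neg] at h2
  exact absurd (Finset.le_max' _ _ hck) (not_le.mpr h2)


def scand (f : Fin n → Fin n) (j : Fin n) (h : ¬ IsMin f j) : Finset (Fin n) :=
  Finset.univ.filter (fun v => v ∉ (Finset.Iio j).image f ∧ rmin f j h < v)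

lemma mem_scand {f : Fin n → Fin n} {j : Fin n} {h : ¬ IsMin f j} {v : Fin n} :
    v ∈ scand f j h ↔ v ∉ (Finset.Iio j).image f ∧ rmin f j h < v := by
  simp [scand]

lemma self_mem_scand (π : Equiv.Perm (Fin n)) {j : Fin n} (h : ¬ IsMin ⇑π j) :
    π j ∈ scand ⇑π j h := by
  refine mem_scand.mpr ⟨?_, rmin_lt_of_not_min π.injective h⟩
  intro hmem
  obtain ⟨i, hi, he⟩ := Finset.mem_image.mp hmem
  exact absurd (π.injective he) (ne_of_lt (Finset.mem_Iio.mp hi))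

lemma gt_j_of_mem_scand (π : Equiv.Perm (Fin n)) {j : Fin n} {h : ¬ IsMin ⇑π j} {v : Fin n}
    (hv : v ∈ scand ⇑π j h) (hne : v ≠ π j) : j < π.symm v := by
  rcases lt_trichotomy (π.symm v) j with hlt | heq | hgt
  · exact absurd (Finset.mem_image.mpr ⟨π.symm v, Finset.mem_Iio.mpr hlt, π.apply_symm_apply v⟩)
      (mem_scand.mp hv).1
  · exact absurd (by rw [← heq, π.apply_symm_apply]) hne.symm
  · exact hgt

lemma scand_min_132 {π : Equiv.Perm (Fin n)} (hπ : Avoids132 π) {j : Fin n}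
    (h : ¬ IsMin ⇑π j) {v : Fin n} (hv : v ∈ scand ⇑π j h) : π j ≤ v := by
  by_contra hlt
  push_neg at hlt
  have hne : v ≠ π j := ne_of_lt hlt
  have hjk := gt_j_of_mem_scand π hv hne
  obtain ⟨i0, hi0, -, he0⟩ := rmin_argmin π.injective h
  refine hπ ⟨i0, j, π.symm v, hi0, hjk, ?_, ?_⟩
  · rw [π.apply_symm_apply, he0]
    exact (mem_scand.mp hv).2
  · rw [π.apply_symm_apply]
    exact hlt

lemma scand_max_123 {π : Equiv.Perm (Fin n)} (hπ : Avoids123 π) {j : Fin n}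
    (h : ¬ IsMin ⇑π j) {v : Fin n} (hv : v ∈ scand ⇑π j h) : v ≤ π j := by
  by_contra hlt
  push_neg at hlt
  have hne : v ≠ π j := ne_of_gt hlt
  have hjk := gt_j_of_mem_scand π hv hne
  have h2 := h
  simp only [IsMin, not_forall] at h2
  obtain ⟨i', hi', hle⟩ := h2
  push_neg at hle
  have hlt' : π i' < π j :=
    lt_of_le_of_ne hle (fun he => absurd (π.injective he) (ne_of_lt hi'))
  refine hπ ⟨i', j, π.symm v, hi', hjk, hlt', ?_⟩
  rw [π.apply_symm_apply]
  exact hlt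

section Unique

variable {π σ : Equiv.Perm (Fin n)}

lemma unique_step (hd : pdata ⇑π = pdata ⇑σ)
    (hext : ∀ {j : Fin n} (h1 : ¬ IsMin ⇑π j) (h2 : ¬ IsMin ⇑σ j),
      scand ⇑π j h1 = scand ⇑σ j h2 → π j = σ j)
    : π = σ := by
  have key : ∀ m : ℕ, ∀ j : Fin n, j.val < m → π j = σ j := by
    intro m
    induction m with
    | zero => exact fun j hj => absurd hj (Nat.not_lt_zero _)
    | succ m ih =>
      intro j hj
      have ihj : ∀ i : Fin n, i < j → π i = σ i := fun i hi =>
        ih i (lt_of_lt_of_le (Fin.lt_def.mp hi) (Nat.lt_succ_iff.mp hj))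
      have hdj := congrFun hd j
      unfold pdata at hdj
      by_cases hm : IsMin ⇑π j
      · rw [if_pos hm] at hdj
        by_cases hmσ : IsMin ⇑σ j
        · rw [if_pos hmσ] at hdj
          exact Option.some.inj hdj
        · rw [if_neg hmσ] at hdj
          exact absurd hdj (Option.some_ne_none _)
      · rw [if_neg hm] at hdj
        have hmσ : ¬ IsMin ⇑σ j := by
          intro hmσ
          rw [if_pos hmσ] at hdj
          exact absurd hdj.symm (Option.some_ne_none _)
        have himg : (Finset.Iio j).image ⇑π = (Finset.Iio j).image ⇑σ :=
          Finset.image_congr (fun i hi => ihj i (Finset.mem_Iio.mp hi))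
        have hrm : rmin ⇑π j hm = rmin ⇑σ j hmσ := by
          apply le_antisymm
          · exact Finset.min'_le _ _ (himg ▸ Finset.min'_mem _ (iio_img_ne ⇑σ hmσ))
          · exact Finset.min'_le _ _ (himg.symm ▸ Finset.min'_mem _ (iio_img_ne ⇑π hm))
        have hscand : scand ⇑π j hm = scand ⇑σ j hmσ := by
          ext v
          rw [mem_scand, mem_scand, himg, hrm]
        exact hext hm hmσ hscand
  exact Equiv.ext (fun j => key n j j.isLt)

end Unique

noncomputable def compPerm (b : Bool) (π : Equiv.Perm (Fin n)) : Equiv.Perm (Fin n) :=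
  Equiv.ofBijective (comp b ⇑π) (Finite.injective_iff_bijective.mp (comp_injective π.injective))

lemma compPerm_coe (b : Bool) (π : Equiv.Perm (Fin n)) : ⇑(compPerm b π) = comp b ⇑π := rfl

lemma compPerm_avoids132 (π : Equiv.Perm (Fin n)) : Avoids132 (compPerm true π) := by
  rintro ⟨i, j, k, hij, hjk, h1, h2⟩
  exact comp_avoids132 π.injective hij hjk h1 h2

lemma compPerm_avoids123 (π : Equiv.Perm (Fin n)) : Avoids123 (compPerm false π) := by
  rintro ⟨i, j, k, hij, hjk, h1, h2⟩
  exact comp_avoids123 π.injective hij hjk h1 h2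

lemma compPerm_pdata (b : Bool) (π : Equiv.Perm (Fin n)) :
    pdata ⇑(compPerm b π) = pdata ⇑π := pdata_comp π.injective

theorem main (n : ℕ) :
    Nat.card {π : Equiv.Perm (Fin n) // Avoids123 π} =
      Nat.card {π : Equiv.Perm (Fin n) // Avoids132 π} := by
  classical
  set A : Set (Equiv.Perm (Fin n)) := {π | Avoids123 π} with hA
  set B : Set (Equiv.Perm (Fin n)) := {π | Avoids132 π} with hB
  set D : Equiv.Perm (Fin n) → (Fin n → Option (Fin n)) := fun π => pdata ⇑π with hD
  have hinjA : Set.InjOn D A := fun π hπ σ hσ h =>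
    unique_step h (fun {j} h1 h2 hs => le_antisymm
      (scand_max_123 hσ h2 (hs ▸ self_mem_scand π h1))
      (scand_max_123 hπ h1 (hs.symm ▸ self_mem_scand σ h2)))
  have hinjB : Set.InjOn D B := fun π hπ σ hσ h =>
    unique_step h (fun {j} h1 h2 hs => le_antisymm
      (scand_min_132 hπ h1 (hs.symm ▸ self_mem_scand σ h2))
      (scand_min_132 hσ h2 (hs ▸ self_mem_scand π h1)))
  have himg : D '' A = D '' B := by
    apply Set.Subset.antisymm
    · rintro x ⟨π, hπ, rfl⟩
      exact ⟨compPerm true π, compPerm_avoids132 π, compPerm_pdata true π⟩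
    · rintro x ⟨π, hπ, rfl⟩
      exact ⟨compPerm false π, compPerm_avoids123 π, compPerm_pdata false π⟩
  calc Nat.card {π : Equiv.Perm (Fin n) // Avoids123 π} = A.ncard :=
        Nat.card_coe_set_eq A
    _ = (D '' A).ncard := (Set.ncard_image_of_injOn hinjA).symm
    _ = (D '' B).ncard := by rw [himg]
    _ = B.ncard := Set.ncard_image_of_injOn hinjB
    _ = Nat.card {π : Equiv.Perm (Fin n) // Avoids132 π} := (Nat.card_coe_set_eq B).symm

end SS

theorem count_avoid_123_eq_count_avoid_132 (n : ℕ) :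
    Nat.card {π : Equiv.Perm (Fin n) // Avoids123 π} =
      Nat.card {π : Equiv.Perm (Fin n) // Avoids132 π} := by
  exact SS.main n
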